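/- arXiv:2112.13793 — 4 statements merged into one kernel-verified Lean document; each statement's English description precedes it below -/
import Mathlib

section
/- Let W be a d-dimensional vector space over a field F, and let {x_i}_{i∈[n]} and {v_i}_{i∈[n]} be two lists of vectors in W such that: (1) the v_i span W; (2) no two distinct x_i, x_j are parallel (in particular all x_i are nonzero); (3) for every hyperplane H of W, if at least d−1 of the v_i lie in H, then the number of indices i with x_i ∈ H is at least the number of indices i with v_i ∈ H. Then there exists a permutation π of [n] and nonzero scalars λ_i ∈ F such that v_i = λ_i x_{π(i)} for all i ∈ [n]. -/
open Module

section Aux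

variable {F W : Type*} [Field F] [AddCommGroup W] [Module F W] [FiniteDimensional F W]

private lemma aux_finrank_sup (U : Submodule F W) {w : W} (hwU : w ∉ U) :
    finrank F ↥(U ⊔ (F ∙ w)) = finrank F U + 1 := by
  have hw0 : w ≠ 0 := fun h => hwU (h ▸ U.zero_mem)
  have hinf : U ⊓ (F ∙ w) = ⊥ := by
    rw [eq_bot_iff]
    intro u hu
    rw [Submodule.mem_inf] at hu
    obtain ⟨huU, huw⟩ := hu
    rw [Submodule.mem_span_singleton] at huw
    obtain ⟨c, rfl⟩ := huw
    rcases eq_or_ne c 0 with rfl | hc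
    · simp
    · exfalso
      apply hwU
      have := U.smul_mem c⁻¹ huU
      rwa [inv_smul_smul₀ hc] at this
  have h := Submodule.finrank_sup_add_finrank_inf_eq U (F ∙ w)
  rw [hinf, finrank_bot, finrank_span_singleton hw0] at h
  omega

private lemma aux_sup_eq {U K : Submodule F W} {w : W} (hUK : U ≤ K) (hw : w ∈ K)
    (hwU : w ∉ U) (hK : finrank F K = finrank F U + 1) :
    U ⊔ (F ∙ w) = K := by
  have hle : U ⊔ (F ∙ w) ≤ K := sup_le hUK ((Submodule.span_singleton_le_iff_mem w K).mpr hw)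
  exact Submodule.eq_of_le_of_finrank_le hle (by rw [hK, aux_finrank_sup U hwU])

/-- Key counting claim, by downward induction on codimension: any subspace `U` of
codimension `k ≥ 1` containing at least `finrank U` many of the `v i` contains at least
as many `x i`'s as `v i`'s. -/
private lemma key {d n : ℕ} (hd : finrank F W = d) (x v : Fin n → W)
    (hspan : Submodule.span F (Set.range v) = ⊤)
    (hH : ∀ H : Submodule F W, finrank F H = d - 1 →
      d - 1 ≤ {i | v i ∈ H}.ncard → {i | v i ∈ H}.ncard ≤ {i | x i ∈ H}.ncard) :
    ∀ k, 1 ≤ k → ∀ U : Submodule F W, finrank F U + k = d →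
      finrank F U ≤ {i | v i ∈ U}.ncard →
      {i | v i ∈ U}.ncard ≤ {i | x i ∈ U}.ncard := by
  intro k
  induction k with
  | zero => omega
  | succ k ih =>
    intro _ U hU hva
    rcases Nat.eq_zero_or_pos k with rfl | hk
    · exact hH U (by omega) (by omega)
    classical
    by_contra hcon
    push_neg at hcon
    set m := finrank F U with hm
    have hbridge : ∀ (p : Fin n → Prop), {i | p i}.ncard = (Finset.univ.filter p).card := by
      intro p
      rw [← Set.ncard_coe_finset]
      congr 1
      ext i
      simp
    rw [hbridge, hbridge] at hcon
    rw [hbridge] at hva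
    set sv : Finset (Fin n) := Finset.univ.filter (fun i => v i ∈ U) with hsv
    set sx : Finset (Fin n) := Finset.univ.filter (fun i => x i ∈ U) with hsx
    set ov : Finset (Fin n) := Finset.univ.filter (fun i => v i ∉ U) with hov
    set ox : Finset (Fin n) := Finset.univ.filter (fun i => x i ∉ U) with hox
    -- hcon : sx.card < sv.card ; hva : m ≤ sv.card (as cards)
    set f : Fin n → Submodule F W := fun i => U ⊔ (F ∙ v i) with hf
    set T : Finset (Submodule F W) := ov.image f with hT
    have hKfacts : ∀ K : Submodule F W, K ∈ T → finrank F K = m + 1 ∧ U ≤ K ∧ (∃ j, v j ∉ U ∧ v j ∈ K) := by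
      intro K hK
      simp only [hT, Finset.mem_image, hov, Finset.mem_filter, Finset.mem_univ, true_and] at hK
      obtain ⟨j, hj, rfl⟩ := hK
      exact ⟨aux_finrank_sup U hj, le_sup_left,
        j, hj, Submodule.mem_sup_right (Submodule.mem_span_singleton_self _)⟩
    have hmemc : ∀ K : Submodule F W, finrank F K = m + 1 → U ≤ K → ∀ w, w ∉ U →
        (w ∈ K ↔ U ⊔ (F ∙ w) = K) := by
      intro K h1 h2 w hw
      constructor
      · intro hwK
        exact aux_sup_eq h2 hwK hw h1
      · rintro rfl
        exact Submodule.mem_sup_right (Submodule.mem_span_singleton_self _)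
    -- counting decomposition
    have hcount : ∀ (y : Fin n → W) (K : Submodule F W), U ≤ K →
        (Finset.univ.filter (fun l => y l ∈ K)).card
          = (Finset.univ.filter (fun l => y l ∈ U)).card
            + ((Finset.univ.filter (fun l => y l ∉ U)).filter (fun l => y l ∈ K)).card := by
      intro y K hUK
      rw [← Finset.card_filter_add_card_filter_not (p := fun l => y l ∈ U)
        (s := Finset.univ.filter (fun l => y l ∈ K))]
      congr 1
      · rw [Finset.filter_filter]
        congr 1
        ext l
        simp only [Finset.mem_filter, Finset.mem_univ, true_and]
        exact ⟨fun h => h.2, fun h => ⟨hUK h, h⟩⟩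
      · rw [Finset.filter_filter, Finset.filter_filter]
        congr 1
        ext l
        simp only [Finset.mem_filter, Finset.mem_univ, true_and]
        tauto
    have hperK : ∀ K ∈ T, sv.card + (ov.filter (fun l => v l ∈ K)).card
        ≤ sx.card + (ox.filter (fun l => x l ∈ K)).card := by
      intro K hK
      obtain ⟨h1, h2, j, hj, hjK⟩ := hKfacts K hK
      have hv' := hcount v K h2
      have hx' := hcount x K h2
      rw [← hsv, ← hov] at hv'
      rw [← hsx, ← hox] at hx'
      have hprem : finrank F K ≤ {l | v l ∈ K}.ncard := by
        rw [hbridge, hv', h1]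
        have hjmem : j ∈ ov.filter (fun l => v l ∈ K) := by
          simp only [Finset.mem_filter, hov, Finset.mem_univ, true_and]
          exact ⟨hj, hjK⟩
        have h3 : 1 ≤ (ov.filter (fun l => v l ∈ K)).card :=
          Finset.card_pos.mpr ⟨j, hjmem⟩
        omega
      have hIH := ih hk K (by omega) hprem
      rw [hbridge, hbridge, hv', hx'] at hIH
      exact hIH
    have hsum_v : ∑ K ∈ T, (ov.filter (fun l => v l ∈ K)).card = ov.card := by
      rw [Finset.card_eq_sum_card_image f ov]
      apply Finset.sum_congr rfl
      intro K hK
      obtain ⟨h1, h2, -⟩ := hKfacts K hK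
      congr 1
      apply Finset.filter_congr
      intro l hl
      simp only [hov, Finset.mem_filter, Finset.mem_univ, true_and] at hl
      constructor
      · intro hlK
        exact (hmemc K h1 h2 (v l) hl).mp hlK
      · intro hfl
        rw [← hfl]
        exact Submodule.mem_sup_right (Submodule.mem_span_singleton_self _)
    have hsum_x : ∑ K ∈ T, (ox.filter (fun l => x l ∈ K)).card ≤ ox.card := by
      set g : Fin n → Submodule F W := fun i => U ⊔ (F ∙ x i) with hg
      set ox' : Finset (Fin n) := ox.filter (fun l => g l ∈ T) with hox'
      have h1 : ox'.card = ∑ K ∈ T, (ox'.filter (fun l => g l = K)).card := by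
        apply Finset.card_eq_sum_card_fiberwise
        intro l hl
        simp only [hox', Finset.mem_filter] at hl
        exact (Finset.mem_filter.mp hl).2
      have h2 : ∀ K ∈ T, ox.filter (fun l => x l ∈ K) = ox'.filter (fun l => g l = K) := by
        intro K hK
        obtain ⟨hr, hUK, -⟩ := hKfacts K hK
        ext l
        simp only [Finset.mem_filter, hox', hox, Finset.mem_univ, true_and]
        constructor
        · rintro ⟨hl, hlK⟩
          have he : U ⊔ (F ∙ x l) = K := (hmemc K hr hUK (x l) hl).mp hlK
          exact ⟨⟨hl, by rw [hg]; simpa [he] using hK⟩, he⟩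
        · rintro ⟨⟨hl, -⟩, he⟩
          refine ⟨hl, ?_⟩
          rw [← he]
          exact Submodule.mem_sup_right (Submodule.mem_span_singleton_self _)
      calc ∑ K ∈ T, (ox.filter (fun l => x l ∈ K)).card
          = ∑ K ∈ T, (ox'.filter (fun l => g l = K)).card := Finset.sum_congr rfl (by
            intro K hK; rw [h2 K hK])
        _ = ox'.card := h1.symm
        _ ≤ ox.card := Finset.card_filter_le _ _
    have htot : T.card * sv.card + ov.card ≤ T.card * sx.card + ox.card := by
      calc T.card * sv.card + ov.card
          = ∑ _K ∈ T, sv.card + ∑ K ∈ T, (ov.filter (fun l => v l ∈ K)).card := by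
            rw [Finset.sum_const, smul_eq_mul, hsum_v]
        _ = ∑ K ∈ T, (sv.card + (ov.filter (fun l => v l ∈ K)).card) := by
            rw [Finset.sum_add_distrib]
        _ ≤ ∑ K ∈ T, (sx.card + (ox.filter (fun l => x l ∈ K)).card) :=
            Finset.sum_le_sum hperK
        _ = ∑ _K ∈ T, sx.card + ∑ K ∈ T, (ox.filter (fun l => x l ∈ K)).card := by
            rw [Finset.sum_add_distrib]
        _ ≤ T.card * sx.card + ox.card := by
            rw [Finset.sum_const, smul_eq_mul]
            exact Nat.add_le_add_left hsum_x _
    have hT2 : 2 ≤ T.card := by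
      by_contra hT
      push_neg at hT
      have hone : ∀ K ∈ T, ∀ K' ∈ T, K = K' := Finset.card_le_one.mp (by omega)
      have hex : ∃ i, v i ∉ U := by
        by_contra hall
        push_neg at hall
        have htop : (⊤ : Submodule F W) ≤ U := by
          rw [← hspan]
          exact Submodule.span_le.mpr (by rintro _ ⟨i, rfl⟩; exact hall i)
        have hUt : U = ⊤ := top_le_iff.mp htop
        rw [hUt, finrank_top] at hm
        omega
      obtain ⟨i₀, hi₀⟩ := hex
      have hK0 : f i₀ ∈ T := Finset.mem_image_of_mem f (by
        simp only [hov, Finset.mem_filter, Finset.mem_univ, true_and]; exact hi₀)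
      have hall : ∀ i, v i ∈ f i₀ := by
        intro i
        by_cases hi : v i ∈ U
        · exact (le_sup_left : U ≤ f i₀) hi
        · have hfi : f i ∈ T := Finset.mem_image_of_mem f (by
            simp only [hov, Finset.mem_filter, Finset.mem_univ, true_and]; exact hi)
          have := hone _ hfi _ hK0
          rw [← this]
          exact Submodule.mem_sup_right (Submodule.mem_span_singleton_self _)
      have htop : (⊤ : Submodule F W) ≤ f i₀ := by
        rw [← hspan]
        exact Submodule.span_le.mpr (by rintro _ ⟨i, rfl⟩; exact hall i)
      have h4 : f i₀ = ⊤ := top_le_iff.mp htop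
      have h5 := aux_finrank_sup U hi₀
      rw [show U ⊔ (F ∙ v i₀) = f i₀ from rfl, h4, finrank_top] at h5
      omega
    have hnv : sv.card + ov.card = n := by
      have h := Finset.card_filter_add_card_filter_not
        (s := (Finset.univ : Finset (Fin n))) (p := fun i => v i ∈ U)
      simpa [hsv, hov] using h
    have hnx : sx.card + ox.card = n := by
      have h := Finset.card_filter_add_card_filter_not
        (s := (Finset.univ : Finset (Fin n))) (p := fun i => x i ∈ U)
      simpa [hsx, hox] using h
    obtain ⟨s, hs⟩ : ∃ s, T.card = 2 + s := ⟨T.card - 2, by omega⟩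
    rw [hs, Nat.add_mul, Nat.add_mul] at htot
    have hmul : s * sx.card ≤ s * sv.card := Nat.mul_le_mul_left s (le_of_lt hcon)
    linarith [htot, hmul, hnv, hnx, hcon]

end Aux

/-- Lemma 12.5.3.5 of Landsberg: if the `v i` span the `d`-dimensional space `W`,
no two `x i` are parallel, and every hyperplane containing at least `d - 1` of the
`v i` contains at least as many `x i`'s as `v i`'s, then the `v i` are a permutation
of nonzero scalar multiples of the `x i`. -/
theorem landsberg_permutation_lemma
    (F W : Type*) [Field F] [AddCommGroup W] [Module F W] [FiniteDimensional F W]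
    (d n : ℕ) (hd : Module.finrank F W = d)
    (x v : Fin n → W)
    (hspan : Submodule.span F (Set.range v) = ⊤)
    (hx0 : ∀ i, x i ≠ 0)
    (hpar : ∀ i j, i ≠ j → ∀ c : F, x j ≠ c • x i)
    (hH : ∀ H : Submodule F W, Module.finrank F H = d - 1 →
      d - 1 ≤ {i | v i ∈ H}.ncard →
      {i | v i ∈ H}.ncard ≤ {i | x i ∈ H}.ncard) :
    ∃ (π : Equiv.Perm (Fin n)) (lam : Fin n → F),
      ∀ i, lam i ≠ 0 ∧ v i = lam i • x (π i) := by
  classical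
  rcases Nat.eq_zero_or_pos d with rfl | hd1
  · refine ⟨1, fun _ => 1, fun i => absurd ?_ (hx0 i)⟩
    have : Subsingleton W := Module.finrank_zero_iff.mp hd
    exact Subsingleton.elim _ _
  -- all v i are nonzero
  have hv0 : ∀ i, v i ≠ 0 := by
    have h := key hd x v hspan hH d hd1 ⊥ (by simp [finrank_bot]) (by simp)
    have hx' : {i | x i ∈ (⊥ : Submodule F W)} = ∅ := by
      ext i
      simp [Submodule.mem_bot, hx0 i]
    rw [hx', Set.ncard_empty] at h
    intro i hi
    have hmem : i ∈ {i | v i ∈ (⊥ : Submodule F W)} := by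
      simp [Submodule.mem_bot, hi]
    have := (Set.ncard_pos (Set.toFinite _)).mpr ⟨i, hmem⟩
    omega
  -- each line spanned by a v contains at least as many x's as v's
  have hline : ∀ i, {j | v j ∈ (F ∙ v i)}.ncard ≤ {j | x j ∈ (F ∙ v i)}.ncard := by
    intro i
    rcases Nat.lt_or_ge 1 d with hd2 | hd2'
    · refine key hd x v hspan hH (d - 1) (by omega) (F ∙ v i) ?_ ?_
      · rw [finrank_span_singleton (hv0 i)]
        omega
      · rw [finrank_span_singleton (hv0 i)]
        exact (Set.ncard_pos (Set.toFinite _)).mpr ⟨i, Submodule.mem_span_singleton_self _⟩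
    · have htop : (F ∙ v i) = ⊤ := Submodule.eq_top_of_finrank_eq (by
        rw [finrank_span_singleton (hv0 i), hd]
        omega)
      rw [htop]
      simp
  -- uniqueness of the x in a line
  have huniq : ∀ (i j j' : Fin n), x j ∈ (F ∙ v i) → x j' ∈ (F ∙ v i) → j = j' := by
    intro i j j' hj hj'
    by_contra hne
    obtain ⟨c, hc⟩ := Submodule.mem_span_singleton.mp hj
    obtain ⟨c', hc'⟩ := Submodule.mem_span_singleton.mp hj'
    have hc0 : c ≠ 0 := by
      rintro rfl
      exact hx0 j (by simp [← hc])
    apply hpar j j' hne (c' * c⁻¹)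
    rw [← hc', ← hc, smul_smul]
    congr 1
    rw [mul_assoc, inv_mul_cancel₀ hc0, mul_one]
  -- existence of an x in each line
  have hex : ∀ i, ∃ j, x j ∈ (F ∙ v i) := by
    intro i
    have h1 : 0 < {j | v j ∈ (F ∙ v i)}.ncard :=
      (Set.ncard_pos (Set.toFinite _)).mpr ⟨i, Submodule.mem_span_singleton_self _⟩
    have h2 : 0 < {j | x j ∈ (F ∙ v i)}.ncard := lt_of_lt_of_le h1 (hline i)
    obtain ⟨j, hj⟩ := (Set.ncard_pos (Set.toFinite _)).mp h2
    exact ⟨j, hj⟩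
  choose g hg using hex
  have hginj : Function.Injective g := by
    intro i i' hgii
    by_contra hne
    have h1 := hg i
    have h2 := hg i'
    rw [← hgii] at h2
    have hxg : x (g i) ≠ 0 := hx0 _
    have e1 : (F ∙ x (g i)) = (F ∙ v i) := by
      apply Submodule.eq_of_le_of_finrank_le
        ((Submodule.span_singleton_le_iff_mem _ _).mpr h1)
      rw [finrank_span_singleton (hv0 i), finrank_span_singleton hxg]
    have e2 : (F ∙ x (g i)) = (F ∙ v i') := by
      apply Submodule.eq_of_le_of_finrank_le
        ((Submodule.span_singleton_le_iff_mem _ _).mpr h2)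
      rw [finrank_span_singleton (hv0 i'), finrank_span_singleton hxg]
    have hvv : v i' ∈ (F ∙ v i) := by
      rw [← e1, e2]
      exact Submodule.mem_span_singleton_self _
    have hsub : ({i, i'} : Set (Fin n)) ⊆ {j | v j ∈ (F ∙ v i)} := by
      rintro l (rfl | rfl)
      · exact Submodule.mem_span_singleton_self _
      · exact hvv
    have h2le : 2 ≤ {j | v j ∈ (F ∙ v i)}.ncard := by
      have h := Set.ncard_le_ncard hsub (Set.toFinite _)
      rwa [Set.ncard_pair hne] at h
    have hsub2 : {j | x j ∈ (F ∙ v i)} ⊆ ({g i} : Set (Fin n)) := by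
      intro j hj
      exact huniq i j (g i) hj h1
    have hle1 : {j | x j ∈ (F ∙ v i)}.ncard ≤ 1 := by
      have h := Set.ncard_le_ncard hsub2 (Set.toFinite _)
      simpa using h
    have := hline i
    omega
  have hgbij : Function.Bijective g := Finite.injective_iff_bijective.mp hginj
  choose c hc using fun i => Submodule.mem_span_singleton.mp (hg i)
  refine ⟨Equiv.ofBijective g hgbij, fun i => (c i)⁻¹, fun i => ?_⟩
  have hc0 : c i ≠ 0 := by
    rintro h
    apply hx0 (g i)
    rw [← hc i, h, zero_smul]
  refine ⟨inv_ne_zero hc0, ?_⟩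
  have hπ : Equiv.ofBijective g hgbij i = g i := rfl
  rw [hπ, ← hc i, smul_smul, inv_mul_cancel₀ hc0, one_smul]
end

section
/- Let F be a field and x_1,…,x_n ∈ X, y_1,…,y_n ∈ Y, z_1,…,z_n ∈ Z with d = dim span{x_i}. Suppose Condition U holds: for every α ∈ F^n, rank(Σ α_i y_i ⊗ z_i) ≥ min(ω(α), n − d + 2). If Σ_{i=1}^n x_i ⊗ y_i ⊗ z_i = Σ_{i=1}^n v_i ⊗ u_i ⊗ w_i for some v_i ∈ X, u_i ∈ Y, w_i ∈ Z, then span{x_1,…,x_n} ⊆ span{v_1,…,v_n}. -/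
/-!
A linear functional `η` vanishing on the `vᵢ`, applied to the first tensor factor, turns the two
decompositions into `∑ η(xᵢ) • yᵢ ⊗ zᵢ = 0`. Condition U gives every nonzero combination of the
`yᵢ ⊗ zᵢ` positive rank, so these are linearly independent and `η` vanishes on every `xᵢ`.
Over a field, a vector killed by every functional that kills a subspace lies in that subspace.
-/

open TensorProduct

/-- The rank of a 2-tensor: minimal number of simple tensors summing to it. -/
noncomputable def tensorRank2 {F Y Z : Type*} [Field F]
    [AddCommGroup Y] [Module F Y] [AddCommGroup Z] [Module F Z]
    (t : TensorProduct F Y Z) : ℕ :=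
  sInf {m | ∃ (a : Fin m → Y) (b : Fin m → Z), t = ∑ i, a i ⊗ₜ[F] b i}

@[simp]
lemma tensorRank2_zero {F Y Z : Type*} [Field F]
    [AddCommGroup Y] [Module F Y] [AddCommGroup Z] [Module F Z] :
    tensorRank2 (0 : TensorProduct F Y Z) = 0 :=
  Nat.sInf_eq_zero.mpr <| .inl ⟨Fin.elim0, Fin.elim0, by simp⟩

lemma linearIndependent_tmul_of_min_le_tensorRank2 {F Y Z ι : Type*} [Field F]
    [AddCommGroup Y] [Module F Y] [AddCommGroup Z] [Module F Z] [Fintype ι]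
    (y : ι → Y) (z : ι → Z) {b : ℕ} (hb : 0 < b)
    (hU : ∀ α : ι → F, min {i | α i ≠ 0}.ncard b ≤ tensorRank2 (∑ i, α i • (y i ⊗ₜ[F] z i))) :
    LinearIndependent F fun i ↦ y i ⊗ₜ[F] z i := by
  refine Fintype.linearIndependent_iff.mpr fun α hα ↦ ?_
  have hsupp := hU α
  rw [hα, tensorRank2_zero, Nat.le_zero, Nat.min_eq_zero_iff, or_iff_left hb.ne',
    Set.ncard_eq_zero] at hsupp
  simpa [Set.eq_empty_iff_forall_notMem] using hsupp

lemma sum_dual_smul_eq_zero_of_sum_tmul_eq {R M N ι κ : Type*} [CommRing R]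
    [AddCommGroup M] [Module R M] [AddCommGroup N] [Module R N] [Fintype ι] [Fintype κ]
    {x : ι → M} {t : ι → N} {v : κ → M} {s : κ → N} (η : Module.Dual R M)
    (hv : ∀ j, η (v j) = 0) (h : ∑ i, x i ⊗ₜ[R] t i = ∑ j, v j ⊗ₜ[R] s j) :
    ∑ i, η (x i) • t i = 0 := by
  simpa [hv] using congrArg ((TensorProduct.lid R N).toLinearMap ∘ₗ η.rTensor N) h

lemma span_range_le_span_range_of_dual {K V ι κ : Type*} [Field K] [AddCommGroup V] [Module K V]
    {x : ι → V} {v : κ → V}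
    (h : ∀ η : Module.Dual K V, (∀ j, η (v j) = 0) → ∀ i, η (x i) = 0) :
    Submodule.span K (Set.range x) ≤ Submodule.span K (Set.range v) := by
  rw [← Subspace.dualAnnihilator_le_dualAnnihilator_iff]
  intro η hη
  rw [Submodule.mem_dualAnnihilator] at hη ⊢
  have hx : Submodule.span K (Set.range x) ≤ LinearMap.ker η := by
    rw [Submodule.span_le]
    rintro _ ⟨i, rfl⟩
    exact h η (fun j ↦ hη _ (Submodule.subset_span ⟨j, rfl⟩)) i
  exact fun w hw ↦ hx hw

theorem conditionU_span_subset_general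
    (F X Y Z : Type*) [Field F] [AddCommGroup X] [Module F X]
    [AddCommGroup Y] [Module F Y] [AddCommGroup Z] [Module F Z]
    (n : ℕ) (x v : Fin n → X) (y u : Fin n → Y) (z w : Fin n → Z)
    (d : ℕ)
    (hU : ∀ α : Fin n → F,
      min ({i | α i ≠ 0}.ncard) (n - d + 2) ≤
        tensorRank2 (∑ i, α i • (y i ⊗ₜ[F] z i)))
    (h : ∑ i, x i ⊗ₜ[F] (y i ⊗ₜ[F] z i) = ∑ i, v i ⊗ₜ[F] (u i ⊗ₜ[F] w i)) :
    Submodule.span F (Set.range x) ≤ Submodule.span F (Set.range v) := by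
  have hli := linearIndependent_tmul_of_min_le_tensorRank2 y z (Nat.succ_pos _) hU
  refine span_range_le_span_range_of_dual fun η hη ↦ ?_
  exact Fintype.linearIndependent_iff.mp hli _ (sum_dual_smul_eq_zero_of_sum_tmul_eq η hη h)

/-- Under Condition U, any other representation `∑ vᵢ ⊗ uᵢ ⊗ wᵢ` of
`∑ xᵢ ⊗ yᵢ ⊗ zᵢ` satisfies `span {xᵢ} ⊆ span {vᵢ}`. -/
theorem conditionU_span_subset
    (F X Y Z : Type*) [Field F] [AddCommGroup X] [Module F X]
    [AddCommGroup Y] [Module F Y] [AddCommGroup Z] [Module F Z]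
    (n : ℕ) (x v : Fin n → X) (y u : Fin n → Y) (z w : Fin n → Z)
    (d : ℕ) (hd : Module.finrank F (Submodule.span F (Set.range x)) = d)
    (hU : ∀ α : Fin n → F,
      min ({i | α i ≠ 0}.ncard) (n - d + 2) ≤
        tensorRank2 (∑ i, α i • (y i ⊗ₜ[F] z i)))
    (h : ∑ i, x i ⊗ₜ[F] (y i ⊗ₜ[F] z i) = ∑ i, v i ⊗ₜ[F] (u i ⊗ₜ[F] w i)) :
    Submodule.span F (Set.range x) ≤ Submodule.span F (Set.range v) :=
  conditionU_span_subset_general F X Y Z n x v y u z w d hU h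
end

section
/- Let F be a field, Y, Z vector spaces over F, and y_1,…,y_n ∈ Y, z_1,…,z_n ∈ Z. Suppose that for every α ∈ F^n, rank(Σ_{i=1}^n α_i y_i ⊗ z_i) ≥ min(ω(α), k) for some fixed k ≤ n. Then any k of the vectors y_1,…,y_n are linearly independent, and any k of the vectors z_1,…,z_n are linearly independent (i.e., both families have k-rank at least k). -/
/-!
If `y j = ∑_{i ∈ s, i ≠ j} cᵢ yᵢ`, then `∑_{i ∈ s} yᵢ ⊗ zᵢ = ∑_{i ∈ s, i ≠ j} yᵢ ⊗ (zᵢ + cᵢ z j)`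
has rank below `|s|`; taking `α` the indicator of `s` (weight `|s| = k`) contradicts Condition U.
The statement for the `zᵢ` follows by symmetry, since swapping the tensor factors preserves rank.
-/

open TensorProduct

open Finset Submodule

section

variable {F Y Z ι : Type*} [Field F] [AddCommGroup Y] [Module F Y] [AddCommGroup Z] [Module F Z]

lemma tensorRank2_sum_tmul_le_card (s : Finset ι) (a : ι → Y) (b : ι → Z) :
    tensorRank2 (∑ i ∈ s, a i ⊗ₜ[F] b i) ≤ #s := by
  refine Nat.sInf_le ⟨fun i => a (s.equivFin.symm i), fun i => b (s.equivFin.symm i), ?_⟩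
  rw [← sum_coe_sort s]
  exact (Equiv.sum_comp s.equivFin.symm (fun i : s => a i ⊗ₜ[F] b i)).symm

lemma tensorRank2_comm_le (t : Y ⊗[F] Z) :
    tensorRank2 (TensorProduct.comm F Y Z t) ≤ tensorRank2 t := by
  obtain ⟨a, b, ht⟩ : ∃ (a : Fin (tensorRank2 t) → Y) (b : Fin (tensorRank2 t) → Z),
      t = ∑ i, a i ⊗ₜ[F] b i :=
    Nat.sInf_mem (exists_sum_tmul_eq t)
  have hcomm : TensorProduct.comm F Y Z t = ∑ i, b i ⊗ₜ[F] a i := by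
    simp [ht]
  simpa [hcomm] using tensorRank2_sum_tmul_le_card (F := F) univ b a

lemma tensorRank2_comm (t : Y ⊗[F] Z) :
    tensorRank2 (TensorProduct.comm F Y Z t) = tensorRank2 t :=
  (tensorRank2_comm_le t).antisymm <| by
    simpa using tensorRank2_comm_le (TensorProduct.comm F Y Z t)

lemma sum_tmul_eq_sum_erase_of_sum_smul_eq [DecidableEq ι] {s : Finset ι} {j : ι} (hj : j ∈ s)
    (y : ι → Y) (z : ι → Z) (c : ι → F) (hc : ∑ i ∈ s.erase j, c i • y i = y j) :
    ∑ i ∈ s, y i ⊗ₜ[F] z i = ∑ i ∈ s.erase j, y i ⊗ₜ[F] (z i + c i • z j) := by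
  rw [← add_sum_erase s _ hj, ← hc, sum_tmul, ← sum_add_distrib]
  refine sum_congr rfl fun i _ => ?_
  rw [tmul_add, tmul_smul, smul_tmul']
  abel

lemma tensorRank2_sum_tmul_lt_card {s : Finset ι} {y : ι → Y} (hy : ¬ LinearIndepOn F y s)
    (z : ι → Z) : tensorRank2 (∑ i ∈ s, y i ⊗ₜ[F] z i) < #s := by
  classical
  obtain ⟨j, hj, hspan⟩ : ∃ j ∈ s, y j ∈ span F (y '' ↑(s.erase j)) := by
    simpa [linearIndepOn_iff_notMem_span, coe_erase] using hy
  obtain ⟨c, hc⟩ := (mem_span_image_finset_iff_exists_fun' F).1 hspan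
  calc tensorRank2 (∑ i ∈ s, y i ⊗ₜ[F] z i)
      = tensorRank2 (∑ i ∈ s.erase j, y i ⊗ₜ[F] (z i + c i • z j)) := by
        rw [sum_tmul_eq_sum_erase_of_sum_smul_eq hj y z c hc]
    _ ≤ #(s.erase j) := tensorRank2_sum_tmul_le_card _ _ _
    _ < #s := card_erase_lt_of_mem hj

variable (F) in
/-- Condition U; `{i | α i ≠ 0}.ncard` is the weight `ω(α)`. -/
def ConditionU [Fintype ι] (y : ι → Y) (z : ι → Z) (k : ℕ) : Prop :=
  ∀ α : ι → F, min {i | α i ≠ 0}.ncard k ≤ tensorRank2 (∑ i, α i • (y i ⊗ₜ[F] z i))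

namespace ConditionU

variable [Fintype ι] {y : ι → Y} {z : ι → Z} {k : ℕ}

lemma swap (h : ConditionU F y z k) : ConditionU F z y k := by
  intro α
  have hcomm : ∑ i, α i • (z i ⊗ₜ[F] y i) =
      TensorProduct.comm F Y Z (∑ i, α i • (y i ⊗ₜ[F] z i)) := by
    simp
  rw [hcomm, tensorRank2_comm]
  exact h α

lemma linearIndepOn_left (h : ConditionU F y z k) {s : Finset ι} (hs : #s ≤ k) :
    LinearIndepOn F y s := by
  classical
  by_contra hy
  have hα := h fun i => if i ∈ s then 1 else 0
  simp only [ite_smul, one_smul, zero_smul, sum_ite_mem, univ_inter] at hα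
  have hweight : {i | (if i ∈ s then (1 : F) else 0) ≠ 0}.ncard = #s := by
    simp [Set.ncard_coe_finset]
  rw [hweight, min_eq_left hs] at hα
  exact hα.not_gt (tensorRank2_sum_tmul_lt_card hy z)

end ConditionU

end

theorem conditionU_implies_krank_general
    (F Y Z : Type*) [Field F] [AddCommGroup Y] [Module F Y]
    [AddCommGroup Z] [Module F Z]
    (n k : ℕ)
    (y : Fin n → Y) (z : Fin n → Z)
    (hU : ∀ α : Fin n → F,
      min ({i | α i ≠ 0}.ncard) k ≤ tensorRank2 (∑ i, α i • (y i ⊗ₜ[F] z i))) :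
    (∀ s : Finset (Fin n), s.card = k →
      LinearIndependent F (fun i : s => y i.1)) ∧
    (∀ s : Finset (Fin n), s.card = k →
      LinearIndependent F (fun i : s => z i.1)) :=
  have hU : ConditionU F y z k := hU
  ⟨fun _ hs => hU.linearIndepOn_left hs.le, fun _ hs => hU.swap.linearIndepOn_left hs.le⟩

/-- If `rank (∑ αᵢ yᵢ ⊗ zᵢ) ≥ min (ω α) k` for all `α`, then any `k` of the `yᵢ`
are linearly independent, and likewise for the `zᵢ`. -/
theorem conditionU_implies_krank
    (F Y Z : Type*) [Field F] [AddCommGroup Y] [Module F Y]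
    [AddCommGroup Z] [Module F Z]
    (n k : ℕ) (hk : k ≤ n)
    (y : Fin n → Y) (z : Fin n → Z)
    (hU : ∀ α : Fin n → F,
      min ({i | α i ≠ 0}.ncard) k ≤ tensorRank2 (∑ i, α i • (y i ⊗ₜ[F] z i))) :
    (∀ s : Finset (Fin n), s.card = k →
      LinearIndependent F (fun i : s => y i.1)) ∧
    (∀ s : Finset (Fin n), s.card = k →
      LinearIndependent F (fun i : s => z i.1)) :=
  conditionU_implies_krank_general F Y Z n k y z hU
end

section
/- Over the field F_4 = F_2[ξ] with ξ² = ξ + 1, the tensor θ = a⊗a⊗a + b⊗b⊗b + c⊗(a+b)⊗(a+b) ∈ F_4^3 ⊗ F_4^2 ⊗ F_4^2 admits at least two distinct representations as a sum of 3 product tensors. In particular, the rank-3 decomposition of θ is not unique over F_4, even though it is unique over the subfield F_2. -/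
open TensorProduct

/-- Over `𝔽₄`, the tensor `a⊗a⊗a + b⊗b⊗b + c⊗(a+b)⊗(a+b)` admits a representation
as a sum of 3 product tensors different (as a multiset) from the obvious one:
the rank-3 decomposition is not unique over `𝔽₄`. -/
theorem example_not_unique_over_F4 :
    letI F := GaloisField 2 2
    letI a3 : Fin 3 → F := ![1, 0, 0]
    letI b3 : Fin 3 → F := ![0, 1, 0]
    letI c3 : Fin 3 → F := ![0, 0, 1]
    letI a : Fin 2 → F := ![1, 0]
    letI b : Fin 2 → F := ![0, 1]
    letI θ := a3 ⊗ₜ[F] (a ⊗ₜ[F] a) + b3 ⊗ₜ[F] (b ⊗ₜ[F] b) +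
      c3 ⊗ₜ[F] ((a + b) ⊗ₜ[F] (a + b))
    ∃ (v : Fin 3 → (Fin 3 → F)) (u w : Fin 3 → (Fin 2 → F)),
      θ = ∑ i, v i ⊗ₜ[F] (u i ⊗ₜ[F] w i) ∧
      Multiset.map (fun i => v i ⊗ₜ[F] (u i ⊗ₜ[F] w i)) Finset.univ.val ≠
        {a3 ⊗ₜ[F] (a ⊗ₜ[F] a), b3 ⊗ₜ[F] (b ⊗ₜ[F] b),
         c3 ⊗ₜ[F] ((a + b) ⊗ₜ[F] (a + b))} := by
  haveI : Fact (Nat.Prime 2) := ⟨by norm_num⟩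
  set F := GaloisField 2 2 with hF
  haveI : Fintype F := Fintype.ofFinite F
  have hcard : Fintype.card F = 4 := by
    have h := GaloisField.card 2 2 (by norm_num)
    rw [Nat.card_eq_fintype_card] at h
    norm_num at h
    exact h
  have h2 : (2 : F) = 0 := by
    have := CharP.cast_eq_zero F 2
    exact_mod_cast this
  obtain ⟨x, hx0, hx1⟩ : ∃ x : F, x ≠ 0 ∧ x ≠ 1 := by
    by_contra h
    push_neg at h
    haveI : DecidableEq F := Classical.decEq F
    have hsub : (Finset.univ : Finset F) ⊆ {0, 1} := by
      intro x _
      rcases eq_or_ne x 0 with h0 | h0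
      · simp [h0]
      · simp [h x h0]
    have hle := Finset.card_le_card hsub
    have h12 : ({0,1} : Finset F).card ≤ 2 := Finset.card_insert_le _ _ |>.trans (by simp)
    rw [Finset.card_univ, hcard] at hle
    omega
  have hx3 : x ^ 3 = 1 := by
    have h := FiniteField.pow_card_sub_one_eq_one x hx0
    rwa [hcard] at h
  have hq : x ^ 2 + x + 1 = 0 := by
    have hfac : (x - 1) * (x ^ 2 + x + 1) = 0 := by linear_combination hx3
    rcases mul_eq_zero.mp hfac with h | h
    · exact absurd (sub_eq_zero.mp h) hx1
    · exact h
  set a3 : Fin 3 → F := ![1, 0, 0] with ha3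
  set b3 : Fin 3 → F := ![0, 1, 0] with hb3
  set c3 : Fin 3 → F := ![0, 0, 1] with hc3
  set a : Fin 2 → F := ![1, 0] with ha
  set b : Fin 2 → F := ![0, 1] with hb
  refine ⟨![x • a3, b3 + x • a3, c3 + (x + 1) • a3],
          ![a + x • b, b, a + b], ![a + x • b, b, a + b], ?_, ?_⟩
  · rw [Fin.sum_univ_three]
    simp only [Matrix.cons_val_zero, Matrix.cons_val_one, Matrix.head_cons, Matrix.cons_val_two,
      Matrix.tail_cons]
    simp only [tmul_add, add_tmul, tmul_smul, ← smul_tmul', smul_add, smul_smul]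
    match_scalars
    all_goals first
      | ring1
      | linear_combination (-x) * h2
      | linear_combination -hq
      | linear_combination (1 - x) * hq + (-(x + 1)) * h2
  · intro hMS
    -- the functional picking coordinate (0, 1, 1)
    let ψ : (Fin 3 → F) ⊗[F] ((Fin 2 → F) ⊗[F] (Fin 2 → F)) →ₗ[F] F :=
      (TensorProduct.lid F F).toLinearMap ∘ₗ
        TensorProduct.map (LinearMap.proj 0)
          ((TensorProduct.lid F F).toLinearMap ∘ₗ
            TensorProduct.map (LinearMap.proj 1) (LinearMap.proj 1))
    have hmem : (x • a3) ⊗ₜ[F] ((a + x • b) ⊗ₜ[F] (a + x • b)) ∈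
        ({a3 ⊗ₜ[F] (a ⊗ₜ[F] a), b3 ⊗ₜ[F] (b ⊗ₜ[F] b),
          c3 ⊗ₜ[F] ((a + b) ⊗ₜ[F] (a + b))} : Multiset _) := by
      rw [← hMS]
      refine Multiset.mem_map.mpr ⟨0, ?_, by simp; rfl⟩
      simp [Finset.mem_univ]
    have hψs : ψ ((x • a3) ⊗ₜ[F] ((a + x • b) ⊗ₜ[F] (a + x • b))) = 1 := by
      simp only [ψ, ha3, hb3, hc3, ha, hb, LinearMap.coe_comp, LinearEquiv.coe_coe, Function.comp_apply, TensorProduct.map_tmul, TensorProduct.lid_tmul, LinearMap.proj_apply, Pi.add_apply, Pi.smul_apply, smul_eq_mul, Matrix.cons_val_zero, Matrix.cons_val_one, Matrix.head_cons]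
      norm_num
      linear_combination hx3
    have : (1 : F) = 0 := by
      rcases Multiset.mem_cons.mp hmem with h | h'
      · rw [← hψs, h]; simp only [ψ, ha3, hb3, hc3, ha, hb, LinearMap.coe_comp, LinearEquiv.coe_coe, Function.comp_apply, TensorProduct.map_tmul, TensorProduct.lid_tmul, LinearMap.proj_apply, Pi.add_apply, Pi.smul_apply, smul_eq_mul, Matrix.cons_val_zero, Matrix.cons_val_one, Matrix.head_cons]; norm_num
      rcases Multiset.mem_cons.mp h' with h | h'
      · rw [← hψs, h]; simp only [ψ, ha3, hb3, hc3, ha, hb, LinearMap.coe_comp, LinearEquiv.coe_coe, Function.comp_apply, TensorProduct.map_tmul, TensorProduct.lid_tmul, LinearMap.proj_apply, Pi.add_apply, Pi.smul_apply, smul_eq_mul, Matrix.cons_val_zero, Matrix.cons_val_one, Matrix.head_cons]; norm_num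
      · rw [Multiset.mem_singleton.mp h'] at hψs
        rw [← hψs]; simp only [ψ, ha3, hb3, hc3, ha, hb, LinearMap.coe_comp, LinearEquiv.coe_coe, Function.comp_apply, TensorProduct.map_tmul, TensorProduct.lid_tmul, LinearMap.proj_apply, Pi.add_apply, Pi.smul_apply, smul_eq_mul, Matrix.cons_val_zero, Matrix.cons_val_one, Matrix.head_cons]; norm_num
    exact one_ne_zero this
end
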